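/- For positive reals α, rI, rF, k with rI < rF < k, and for u ∈ (0, k] with s = min(rF, u), the per-stripe optimal objective k·α − min(rI, s)·(u/s − 1)·α plus the new-node term (k + rF − u)·α, viewed as a function of u ∈ (0, k], is minimized over u ∈ (0, k] uniquely at u = k, where it equals (rI + k(1 − rI/rF))·α + rF·α. -/
import Mathlib


/-- The per-stripe Regime 1 objective
`k·α − min(rI, s)·(u/s − 1)·α + (k + rF − u)·α`, with `s = min(rF, u)`, viewed as
a function of `u ∈ (0, k]`, is minimized over `(0, k]` uniquely at `u = k`, where
it equals `(rI + k(1 − rI/rF))·α + rF·α`. -/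
theorem stmt_12 (α rI rF k : ℝ) (hα : 0 < α) (hrI : 0 < rI) (h1 : rI < rF)
    (h2 : rF < k) :
    (∀ u : ℝ, 0 < u → u ≤ k →
      (k * α - min rI (min rF u) * (u / min rF u - 1) * α + (k + rF - u) * α ≥
        k * α - min rI (min rF k) * (k / min rF k - 1) * α + (k + rF - k) * α) ∧
      (k * α - min rI (min rF u) * (u / min rF u - 1) * α + (k + rF - u) * α =
        k * α - min rI (min rF k) * (k / min rF k - 1) * α + (k + rF - k) * α →
        u = k)) ∧
    k * α - min rI (min rF k) * (k / min rF k - 1) * α + (k + rF - k) * α =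
      (rI + k * (1 - rI / rF)) * α + rF * α := by
  have hrF : 0 < rF := hrI.trans h1
  have hk : 0 < k := hrF.trans h2
  have hminK : min rF k = rF := min_eq_left h2.le
  have hminI : min rI rF = rI := min_eq_left h1.le
  have key : ∀ u : ℝ, 0 < u → u < k →
      k * α - min rI (min rF u) * (u / min rF u - 1) * α + (k + rF - u) * α >
        k * α - min rI (min rF k) * (k / min rF k - 1) * α + (k + rF - k) * α := by
    intro u hu huk
    rw [hminK, hminI]
    rcases le_or_gt rF u with h | h
    · rw [min_eq_left h, hminI]
      have e1 : rI * (u / rF - 1) * α ≤ rI * (k / rF - 1) * α := by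
        gcongr
      have e2 : (k + rF - u) * α > (k + rF - k) * α := by
        apply mul_lt_mul_of_pos_right _ hα; linarith
      linarith
    · rw [min_eq_right h.le, div_self hu.ne', sub_self, mul_zero, zero_mul, sub_zero]
      have hd : 0 < k / rF - 1 := by
        rw [sub_pos, lt_div_iff₀ hrF]; linarith
      have hp : 0 < rI * (k / rF - 1) * α := by positivity
      have e2 : (k + rF - u) * α > (k + rF - k) * α := by
        apply mul_lt_mul_of_pos_right _ hα; linarith
      linarith
  refine ⟨fun u hu huk => ?_, ?_⟩
  · rcases eq_or_lt_of_le huk with rfl | hlt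
    · exact ⟨le_refl _, fun _ => rfl⟩
    · exact ⟨(key u hu hlt).le, fun h => absurd h (ne_of_gt (key u hu hlt))⟩
  · rw [hminK, hminI]
    field_simp
    ring
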